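/- arXiv:1208.3543 — 3 statements merged into one kernel-verified Lean document; each statement's English description precedes it below -/
import Mathlib

section
/- Let y : [0,∞) → ℝ be a nonnegative differentiable function with y'(t) ≤ c·y(t)³ for a constant c ≥ 0, and suppose M := c·∫₀^∞ y(s) ds + arctan(y(0)) < π/2. Then y(t) ≤ tan(M) for all t ≥ 0; in particular y is uniformly bounded. -/
open Real MeasureTheory

/-! Since `y³ / (1 + y²) ≤ y`, the derivative of `arctan ∘ y` is at most `c y`, so
`arctan (y t) ≤ arctan (y 0) + c ∫₀ᵗ y ≤ M < π / 2`; applying `tan`, which is increasing on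
`(-π/2, π/2)`, gives `y t ≤ tan M`. -/

namespace Real

lemma le_tan_of_arctan_le {x M : ℝ} (hx : arctan x ≤ M) (hM : M < π / 2) : x ≤ tan M := by
  have harctan : arctan x ∈ Set.Ioo (-(π / 2)) (π / 2) :=
    ⟨neg_pi_div_two_lt_arctan x, arctan_lt_pi_div_two x⟩
  have hM' : M ∈ Set.Ioo (-(π / 2)) (π / 2) := ⟨harctan.1.trans_le hx, hM⟩
  simpa only [tan_arctan] using strictMonoOn_tan.monotoneOn harctan hM' hx

end Real

lemma div_one_add_sq_le_mul_of_le_mul_cube {c x d : ℝ} (hc : 0 ≤ c) (hx : 0 ≤ x)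
    (hd : d ≤ c * x ^ 3) : 1 / (1 + x ^ 2) * d ≤ c * x := by
  have hpos : 0 < 1 + x ^ 2 := by positivity
  rw [one_div, inv_mul_le_iff₀ hpos]
  calc d ≤ c * x ^ 3 := hd
    _ ≤ (1 + x ^ 2) * (c * x) := by nlinarith [mul_nonneg hc hx]

lemma arctan_sub_arctan_le_integral_of_deriv_le_mul_cube {c a b : ℝ} {y y' : ℝ → ℝ}
    (hc : 0 ≤ c) (hab : a ≤ b) (hderiv : ∀ t ∈ Set.Icc a b, HasDerivAt y (y' t) t)
    (hnonneg : ∀ t ∈ Set.Icc a b, 0 ≤ y t) (hineq : ∀ t ∈ Set.Icc a b, y' t ≤ c * y t ^ 3) :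
    arctan (y b) - arctan (y a) ≤ c * ∫ s in a..b, y s := by
  have hcont : ContinuousOn y (Set.Icc a b) := fun t ht =>
    (hderiv t ht).continuousAt.continuousWithinAt
  rw [← intervalIntegral.integral_const_mul]
  refine intervalIntegral.sub_le_integral_of_hasDeriv_right_of_le
    (g' := fun t => 1 / (1 + y t ^ 2) * y' t) hab
    (continuous_arctan.comp_continuousOn hcont) (fun t ht => ?_)
    ((continuousOn_const.mul hcont).integrableOn_compact isCompact_Icc) (fun t ht => ?_)
  · exact (hderiv t (Set.Ioo_subset_Icc_self ht)).arctan.hasDerivWithinAt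
  · have ht' := Set.Ioo_subset_Icc_self ht
    exact div_one_add_sq_le_mul_of_le_mul_cube hc (hnonneg t ht') (hineq t ht')

lemma intervalIntegral_le_setIntegral_Ioi {y : ℝ → ℝ} {a b : ℝ} (hab : a ≤ b)
    (hnonneg : ∀ t ∈ Set.Ioi a, 0 ≤ y t) (hint : IntegrableOn y (Set.Ioi a)) :
    ∫ s in a..b, y s ≤ ∫ s in Set.Ioi a, y s := by
  rw [intervalIntegral.integral_of_le hab]
  refine setIntegral_mono_set hint ?_ (Filter.Eventually.of_forall Set.Ioc_subset_Ioi_self)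
  filter_upwards [ae_restrict_mem measurableSet_Ioi] with s hs using hnonneg s hs

theorem bounded_of_arctan_smallness (c : ℝ) (hc : 0 ≤ c) (y y' : ℝ → ℝ)
    (hderiv : ∀ t ∈ Set.Ici (0:ℝ), HasDerivAt y (y' t) t)
    (hnonneg : ∀ t ∈ Set.Ici (0:ℝ), 0 ≤ y t)
    (hineq : ∀ t ∈ Set.Ici (0:ℝ), y' t ≤ c * (y t) ^ 3)
    (hint : IntegrableOn y (Set.Ioi (0:ℝ)))
    (M : ℝ) (hM : M = c * (∫ s in Set.Ioi (0:ℝ), y s) + Real.arctan (y 0))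
    (hMlt : M < Real.pi / 2) :
    ∀ t ∈ Set.Ici (0:ℝ), y t ≤ Real.tan M := by
  intro t ht
  have hIcc : Set.Icc 0 t ⊆ Set.Ici 0 := Set.Icc_subset_Ici_self
  have hgrowth := arctan_sub_arctan_le_integral_of_deriv_le_mul_cube hc ht
    (fun s hs => hderiv s (hIcc hs)) (fun s hs => hnonneg s (hIcc hs))
    (fun s hs => hineq s (hIcc hs))
  have htail := intervalIntegral_le_setIntegral_Ioi ht
    (fun s hs => hnonneg s (Set.Ioi_subset_Ici_self hs)) hint
  refine le_tan_of_arctan_le ?_ hMlt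
  rw [hM]
  linarith [mul_le_mul_of_nonneg_left htail hc]
end

section
/- Let y : [0,∞) → ℝ be nonnegative and differentiable with y'(t) ≤ c·y(t)·(1+y(t)²), and suppose ∫₀^∞ y(s) ds ≤ K for some K ≥ 0. If c·K + arctan(y(0)) < π/2, then sup_{t ≥ 0} y(t) ≤ tan(c·K + arctan(y(0))) < ∞. -/
open Real MeasureTheory

/-!
Along a solution, `d/dt arctan y = y' / (1 + y²) ≤ c y`, so `arctan (y t) ≤ arctan (y 0) + c ∫₀ᵗ y
≤ arctan (y 0) + c K`. Since this stays below `π / 2`, applying `tan` gives the bound.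
-/

theorem Real.le_tan_of_arctan_le_s6 {x b : ℝ} (hx : arctan x ≤ b) (hb : b < π / 2) : x ≤ tan b := by
  have hb_mem : b ∈ Set.Ioo (-(π / 2)) (π / 2) := ⟨(neg_pi_div_two_lt_arctan x).trans_le hx, hb⟩
  simpa only [tan_arctan] using strictMonoOn_tan.monotoneOn (arctan_mem_Ioo x) hb_mem hx

theorem arctan_sub_arctan_le_integral {c a b : ℝ} {y y' : ℝ → ℝ} (hab : a ≤ b)
    (hderiv : ∀ t ∈ Set.Icc a b, HasDerivAt y (y' t) t)
    (hineq : ∀ t ∈ Set.Icc a b, y' t ≤ c * y t * (1 + y t ^ 2))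
    (hint : IntegrableOn y (Set.Icc a b)) :
    arctan (y b) - arctan (y a) ≤ c * ∫ t in a..b, y t := by
  rw [← intervalIntegral.integral_const_mul]
  refine intervalIntegral.sub_le_integral_of_hasDeriv_right_of_le hab
    (fun t ht => (hderiv t ht).arctan.continuousAt.continuousWithinAt)
    (fun t ht => (hderiv t (Set.Ioo_subset_Icc_self ht)).arctan.hasDerivWithinAt)
    (hint.const_mul c) (fun t ht => ?_)
  rw [one_div_mul_eq_div, div_le_iff₀ (by positivity)]
  exact hineq t (Set.Ioo_subset_Icc_self ht)

theorem intervalIntegral_le_integral_Ioi_of_nonneg {f : ℝ → ℝ} {a b : ℝ} (hab : a ≤ b)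
    (hf : ∀ t ∈ Set.Ioi a, 0 ≤ f t) (hint : IntegrableOn f (Set.Ioi a)) :
    ∫ t in a..b, f t ≤ ∫ t in Set.Ioi a, f t := by
  rw [intervalIntegral.integral_of_le hab]
  refine setIntegral_mono_set hint ?_ Set.Ioc_subset_Ioi_self.eventuallyLE
  filter_upwards [ae_restrict_mem measurableSet_Ioi] with t ht using hf t ht

theorem global_bound_negligible_force_general (c K : ℝ) (hc : 0 ≤ c)
    (y y' : ℝ → ℝ)
    (hderiv : ∀ t ∈ Set.Ici (0:ℝ), HasDerivAt y (y' t) t)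
    (hnonneg : ∀ t ∈ Set.Ici (0:ℝ), 0 ≤ y t)
    (hineq : ∀ t ∈ Set.Ici (0:ℝ), y' t ≤ c * y t * (1 + (y t) ^ 2))
    (hint : IntegrableOn y (Set.Ioi (0:ℝ)))
    (hintK : (∫ s in Set.Ioi (0:ℝ), y s) ≤ K)
    (hsmall : c * K + Real.arctan (y 0) < Real.pi / 2) :
    ∀ t ∈ Set.Ici (0:ℝ), y t ≤ Real.tan (c * K + Real.arctan (y 0)) := by
  intro t (ht : 0 ≤ t)
  have hIcc : Set.Icc 0 t ⊆ Set.Ici 0 := Set.Icc_subset_Ici_self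
  have hgrowth : arctan (y t) - arctan (y 0) ≤ c * ∫ s in (0:ℝ)..t, y s :=
    arctan_sub_arctan_le_integral ht (fun s hs => hderiv s (hIcc hs))
      (fun s hs => hineq s (hIcc hs))
      ((integrableOn_Icc_iff_integrableOn_Ioc).2 (hint.mono_set Set.Ioc_subset_Ioi_self))
  have hpartial : ∫ s in (0:ℝ)..t, y s ≤ K :=
    (intervalIntegral_le_integral_Ioi_of_nonneg ht
      (fun s hs => hnonneg s (Set.mem_Ici.2 (le_of_lt hs))) hint).trans hintK
  refine le_tan_of_arctan_le_s6 ?_ hsmall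
  linarith [mul_le_mul_of_nonneg_left hpartial hc]

theorem global_bound_negligible_force (c K : ℝ) (hc : 0 ≤ c) (hK : 0 ≤ K)
    (y y' : ℝ → ℝ)
    (hderiv : ∀ t ∈ Set.Ici (0:ℝ), HasDerivAt y (y' t) t)
    (hnonneg : ∀ t ∈ Set.Ici (0:ℝ), 0 ≤ y t)
    (hineq : ∀ t ∈ Set.Ici (0:ℝ), y' t ≤ c * y t * (1 + (y t) ^ 2))
    (hint : IntegrableOn y (Set.Ioi (0:ℝ)))
    (hintK : (∫ s in Set.Ioi (0:ℝ), y s) ≤ K)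
    (hsmall : c * K + Real.arctan (y 0) < Real.pi / 2) :
    ∀ t ∈ Set.Ici (0:ℝ), y t ≤ Real.tan (c * K + Real.arctan (y 0)) :=
  global_bound_negligible_force_general c K hc y y' hderiv hnonneg hineq hint hintK hsmall
end

section
/- Let y : [0,T] → ℝ be nonnegative and differentiable with y'(t) ≤ g(t) + c·y(t)³ where g ≥ 0 is integrable and c ≥ 0, and suppose y also satisfies the integral bound ∫₀ᵀ y(s) ds ≤ K. If ∫₀ᵀ g(s) ds + c·K + arctan(y(0)) < π/2, then y(t) ≤ tan(∫₀ᵀ g + c·K + arctan(y(0))) for all t ∈ [0,T]. -/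
open Real MeasureTheory intervalIntegral

theorem global_bound_time_dependent_force (T c K : ℝ) (hT : 0 < T) (hc : 0 ≤ c) (hK : 0 ≤ K)
    (g y y' : ℝ → ℝ)
    (hg : ∀ t ∈ Set.Icc (0:ℝ) T, 0 ≤ g t)
    (hgint : IntervalIntegrable g volume 0 T)
    (hderiv : ∀ t ∈ Set.Icc (0:ℝ) T, HasDerivAt y (y' t) t)
    (hnonneg : ∀ t ∈ Set.Icc (0:ℝ) T, 0 ≤ y t)
    (hineq : ∀ t ∈ Set.Icc (0:ℝ) T, y' t ≤ g t + c * (y t) ^ 3)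
    (hyK : (∫ s in (0:ℝ)..T, y s) ≤ K)
    (hsmall : (∫ s in (0:ℝ)..T, g s) + c * K + Real.arctan (y 0) < Real.pi / 2) :
    ∀ t ∈ Set.Icc (0:ℝ) T,
      y t ≤ Real.tan ((∫ s in (0:ℝ)..T, g s) + c * K + Real.arctan (y 0)) := by
  intro t ht
  set B : ℝ := (∫ s in (0:ℝ)..T, g s) + c * K + Real.arctan (y 0) with hB
  -- continuity of y on [0,T]
  have hycont : ContinuousOn y (Set.Icc 0 T) := fun s hs =>
    ((hderiv s hs).continuousAt).continuousWithinAt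
  have hyint : IntervalIntegrable y volume 0 T :=
    hycont.intervalIntegrable_of_Icc hT.le
  -- integral of g on [0,T] nonneg; integral of y in [0,T] nonneg
  have hgT0 : ∀ a b, 0 ≤ a → b ≤ T → a ≤ b →
      (0:ℝ) ≤ ∫ s in a..b, g s := by
    intro a b ha hb hab
    apply intervalIntegral.integral_nonneg hab
    intro u hu
    exact hg u ⟨ha.trans hu.1, hu.2.trans hb⟩
  have hyT0 : ∀ a b, 0 ≤ a → b ≤ T → a ≤ b →
      (0:ℝ) ≤ ∫ s in a..b, y s := by
    intro a b ha hb hab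
    apply intervalIntegral.integral_nonneg hab
    intro u hu
    exact hnonneg u ⟨ha.trans hu.1, hu.2.trans hb⟩
  -- key inequality: arctan (y t) - arctan (y 0) ≤ ∫ (g + c*y) on [0,t]
  have hsub1 : Set.uIcc (0:ℝ) t ⊆ Set.uIcc (0:ℝ) T := by
    rw [Set.uIcc_of_le ht.1, Set.uIcc_of_le (ht.1.trans ht.2)]
    exact Set.Icc_subset_Icc le_rfl ht.2
  have hsub2 : Set.uIcc t T ⊆ Set.uIcc (0:ℝ) T := by
    rw [Set.uIcc_of_le ht.2, Set.uIcc_of_le (ht.1.trans ht.2)]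
    exact Set.Icc_subset_Icc ht.1 le_rfl
  have hgint_t : IntervalIntegrable g volume 0 t := hgint.mono_set hsub1
  have hyint_t : IntervalIntegrable y volume 0 t := hyint.mono_set hsub1
  have hφint : IntegrableOn (fun s => g s + c * y s) (Set.Icc 0 t) := by
    have := (hgint_t.add (hyint_t.const_mul c))
    rw [intervalIntegrable_iff_integrableOn_Icc_of_le ht.1] at this
    exact this
  have key : Real.arctan (y t) - Real.arctan (y 0) ≤
      ∫ s in (0:ℝ)..t, (g s + c * y s) := by
    apply sub_le_integral_of_hasDeriv_right_of_le ht.1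
      (g' := fun s => 1 / (1 + (y s) ^ 2) * y' s)
    · exact fun s hs => (Real.continuous_arctan.continuousAt).comp_continuousWithinAt
        (hycont.mono (Set.Icc_subset_Icc le_rfl ht.2) s hs)
    · intro s hs
      have hsT : s ∈ Set.Icc (0:ℝ) T := ⟨hs.1.le, hs.2.le.trans ht.2⟩
      exact (((Real.hasDerivAt_arctan (y s)).comp s (hderiv s hsT))).hasDerivWithinAt
    · exact hφint
    · intro s hs
      have hsT : s ∈ Set.Icc (0:ℝ) T := ⟨hs.1.le, hs.2.le.trans ht.2⟩
      have hy0 : 0 ≤ y s := hnonneg s hsT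
      have h1 : (0:ℝ) < 1 + (y s) ^ 2 := by positivity
      have hy' : y' s ≤ g s + c * (y s) ^ 3 := hineq s hsT
      rw [div_mul_eq_mul_div, one_mul, div_le_iff₀ h1]
      calc y' s ≤ g s + c * (y s) ^ 3 := hy'
        _ ≤ (g s + c * y s) * (1 + (y s) ^ 2) := by nlinarith [hg s hsT, sq_nonneg (y s)]
  -- bound the integral by B - arctan(y 0)
  have hsplit : ∫ s in (0:ℝ)..t, (g s + c * y s)
      = (∫ s in (0:ℝ)..t, g s) + c * ∫ s in (0:ℝ)..t, y s := by
    rw [intervalIntegral.integral_add hgint_t (hyint_t.const_mul c),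
      intervalIntegral.integral_const_mul]
  have hgle : (∫ s in (0:ℝ)..t, g s) ≤ ∫ s in (0:ℝ)..T, g s := by
    have := intervalIntegral.integral_add_adjacent_intervals hgint_t (hgint.mono_set hsub2)
    rw [← this]
    have := hgT0 t T ht.1 le_rfl ht.2
    linarith
  have hyle : (∫ s in (0:ℝ)..t, y s) ≤ K := by
    have hsplit2 := intervalIntegral.integral_add_adjacent_intervals hyint_t (hyint.mono_set hsub2)
    have := hyT0 t T ht.1 le_rfl ht.2
    linarith
  have harct : Real.arctan (y t) ≤ B := by
    have : c * (∫ s in (0:ℝ)..t, y s) ≤ c * K :=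
      mul_le_mul_of_nonneg_left hyle hc
    rw [hB]
    have := key
    rw [hsplit] at this
    linarith
  -- conclude via monotonicity of tan
  have hBlt : B < Real.pi / 2 := hsmall
  have hBgt : -(Real.pi / 2) < B := by
    have h1 := hgT0 0 T le_rfl le_rfl hT.le
    have h2 : (0:ℝ) ≤ Real.arctan (y 0) := by have h := Real.arctan_strictMono.monotone (hnonneg 0 ⟨le_rfl, hT.le⟩); rwa [Real.arctan_zero] at h
    have := Real.pi_pos
    have : 0 ≤ c * K := mul_nonneg hc hK
    rw [hB]; nlinarith [Real.pi_pos]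
  calc y t = Real.tan (Real.arctan (y t)) := (Real.tan_arctan _).symm
    _ ≤ Real.tan B := by
        rcases eq_or_lt_of_le harct with h | h
        · rw [h]
        · exact (Real.tan_lt_tan_of_lt_of_lt_pi_div_two
            (Real.neg_pi_div_two_lt_arctan (y t)) hBlt h).le
end
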